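/- Let (Σ, F, λ) be an ergodic invertible measure-preserving dynamical system on a probability space, and let e : Σ → ℤ be integrable with ∫ e dλ = 0. Then the cocycle S_n(x) = Σ_{k=0}^{n-1} e(F^k x) is recurrent: for λ-a.e. x there exist infinitely many n with S_n(x) = 0. -/

import Mathlib

open MeasureTheory Filter

section AtkinsonAux

open Finset
open scoped Topology
set_option maxHeartbeats 1000000
set_option synthInstance.maxHeartbeats 1000000
set_option linter.unusedSectionVars false

variable {X : Type*} [MeasurableSpace X] {lam : Measure X} [IsProbabilityMeasure lam]
  {F : X → X}

/-- The Koopman operator on L². -/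
noncomputable def koopman (lam : Measure X) (F : X → X) (hF : MeasurePreserving F lam lam) :
    Lp ℝ 2 lam →L[ℝ] Lp ℝ 2 lam :=
  (Lp.compMeasurePreservingₗᵢ (E := ℝ) (p := 2) ℝ F hF).toContinuousLinearMap

theorem koopman_apply (hF : MeasurePreserving F lam lam) (f : Lp ℝ 2 lam) :
    ⇑(koopman lam F hF f) =ᵐ[lam] ⇑f ∘ F :=
  Lp.coeFn_compMeasurePreserving f hF

/-- von Neumann: Birkhoff averages of a mean-zero L² function tend to 0 in L². -/
theorem l2_avg_tendsto_zero (hF : MeasurePreserving F lam lam) (herg : Ergodic F lam)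
    {g : X → ℝ} (hg : MemLp g 2 lam) (hgmean : ∫ x, g x ∂lam = 0) :
    Tendsto (fun n => ‖birkhoffAverage ℝ (⇑(koopman lam F hF)) id n (hg.toLp g)‖)
      atTop (𝓝 0) := by
  set U := koopman lam F hF with hUdef
  have hUnorm : ‖U‖ ≤ 1 := LinearIsometry.norm_toContinuousLinearMap_le _
  have h := U.tendsto_birkhoffAverage_orthogonalProjection hUnorm (hg.toLp g)
  set Q := (Submodule.orthogonalProjectionOnto (LinearMap.eqLocus (U : Lp ℝ 2 lam →ₗ[ℝ] Lp ℝ 2 lam)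
    ((1 : Lp ℝ 2 lam →L[ℝ] Lp ℝ 2 lam) : Lp ℝ 2 lam →ₗ[ℝ] Lp ℝ 2 lam))) (hg.toLp g) with hQ
  set P := (Q : Lp ℝ 2 lam) with hP
  have hfix : U P = P := Q.2
  -- P is a.e. constant
  have hcomp : (⇑P) ∘ F =ᵐ[lam] ⇑P := by
    have h1 : ⇑(U P) =ᵐ[lam] (⇑P) ∘ F := koopman_apply hF P
    calc (⇑P) ∘ F =ᵐ[lam] ⇑(U P) := h1.symm
      _ = ⇑P := by rw [hfix]
  obtain ⟨c, hc⟩ := herg.ae_eq_const_of_ae_eq_comp₀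
    (Lp.aestronglyMeasurable P).aemeasurable.nullMeasurable hcomp
  -- inner product of g with P equals c * ∫ g = 0, but also equals ‖P‖²
  have hinner : (inner ℝ (hg.toLp g) P : ℝ) = ‖P‖ ^ 2 := by
    have h0 : (inner ℝ (hg.toLp g - P) P : ℝ) = 0 :=
      Submodule.starProjection_inner_eq_zero (𝕜 := ℝ) (hg.toLp g) P Q.2
    rw [inner_sub_left] at h0
    have h2 : (inner ℝ P P : ℝ) = ‖P‖ ^ 2 := real_inner_self_eq_norm_sq P
    linarith
  have hinner2 : (inner ℝ (hg.toLp g) P : ℝ) = 0 := by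
    rw [L2.inner_def]
    have hae : (fun a => (inner ℝ ((hg.toLp g : Lp ℝ 2 lam) a) (P a) : ℝ))
        =ᵐ[lam] fun a => g a * c := by
      filter_upwards [hg.coeFn_toLp, hc] with a ha hca
      simp only [ha, hca, RCLike.inner_apply, conj_trivial, Function.const_apply]
      ring
    rw [integral_congr_ae hae, integral_mul_const, hgmean, zero_mul]
  have hn2 : ‖P‖ ^ 2 = 0 := by rw [← hinner, hinner2]
  have hn : P = 0 := norm_eq_zero.mp (by nlinarith [norm_nonneg P])
  rw [hn] at h
  simpa [Function.comp_def] using (continuous_norm.tendsto 0).comp h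

theorem koopman_iterate (hF : MeasurePreserving F lam lam) {g : X → ℝ} (hg : MemLp g 2 lam)
    (k : ℕ) : ⇑((⇑(koopman lam F hF))^[k] (hg.toLp g)) =ᵐ[lam] fun x => g (F^[k] x) := by
  induction k with
  | zero => simpa using hg.coeFn_toLp
  | succ k ih =>
    rw [Function.iterate_succ_apply']
    have h1 : ⇑(koopman lam F hF ((⇑(koopman lam F hF))^[k] (hg.toLp g)))
        =ᵐ[lam] ⇑((⇑(koopman lam F hF))^[k] (hg.toLp g)) ∘ F := koopman_apply hF _
    refine h1.trans ?_
    have h2 := hF.quasiMeasurePreserving.ae_eq_comp ih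
    refine h2.trans ?_
    filter_upwards with x
    simp [Function.comp, Function.iterate_succ_apply]

theorem koopman_sum_coeFn (hF : MeasurePreserving F lam lam) {g : X → ℝ} (hg : MemLp g 2 lam)
    (n : ℕ) : ⇑(∑ k ∈ range n, (⇑(koopman lam F hF))^[k] (hg.toLp g))
      =ᵐ[lam] fun x => ∑ k ∈ range n, g (F^[k] x) := by
  induction n with
  | zero =>
    simp only [Finset.sum_range_zero]
    exact Lp.coeFn_zero ℝ 2 lam
  | succ n ih =>
    rw [Finset.sum_range_succ]
    refine (Lp.coeFn_add _ _).trans ?_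
    filter_upwards [ih, koopman_iterate hF hg n] with x h1 h2
    simp only [Pi.add_apply, h1, h2, Finset.sum_range_succ]

/-- The L¹ mean ergodic bound for an L² mean-zero function. -/
theorem l1_avg_small_of_l2 (hF : MeasurePreserving F lam lam) (herg : Ergodic F lam)
    {g : X → ℝ} (hg : MemLp g 2 lam) (hgmean : ∫ x, g x ∂lam = 0) {ε : ℝ} (hε : 0 < ε) :
    ∃ N : ℕ, ∀ n ≥ N, ∫ x, |∑ k ∈ range n, g (F^[k] x)| ∂lam ≤ ε * n := by
  have hl2 := l2_avg_tendsto_zero hF herg hg hgmean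
  rw [Metric.tendsto_atTop] at hl2
  obtain ⟨N, hN⟩ := hl2 ε hε
  refine ⟨N + 1, fun n hn => ?_⟩
  have hn1 : 1 ≤ n := le_trans (Nat.le_add_left 1 N) hn
  set U := koopman lam F hF with hU
  set A := birkhoffAverage ℝ (⇑U) id n (hg.toLp g) with hA
  have hAnorm : ‖A‖ ≤ ε := by
    have := hN n (le_trans (Nat.le_succ N) hn)
    rw [Real.dist_eq, sub_zero] at this
    exact le_of_lt (lt_of_le_of_lt (le_abs_self _) this)
  -- identify A with the pointwise average
  have hAae : ⇑A =ᵐ[lam] fun x => (n : ℝ)⁻¹ • ∑ k ∈ range n, g (F^[k] x) := by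
    have h0 : A = (n : ℝ)⁻¹ • ∑ k ∈ range n, (⇑U)^[k] (hg.toLp g) := rfl
    rw [h0]
    refine (Lp.coeFn_smul _ _).trans ?_
    filter_upwards [koopman_sum_coeFn hF hg n] with x hx
    simp only [Pi.smul_apply, hU, hx]
  -- the integral of ‖A‖ is at most its L² norm
  have hint : ∫ x, ‖A x‖ ∂lam ≤ ‖A‖ := by
    rw [integral_norm_eq_lintegral_enorm (Lp.aestronglyMeasurable A), Lp.norm_def,
      ← eLpNorm_one_eq_lintegral_enorm]
    exact ENNReal.toReal_mono (Lp.eLpNorm_ne_top A)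
      (eLpNorm_le_eLpNorm_of_exponent_le one_le_two (Lp.aestronglyMeasurable A))
  have hcongr : ∫ x, ‖A x‖ ∂lam
      = ∫ x, (n : ℝ)⁻¹ * |∑ k ∈ range n, g (F^[k] x)| ∂lam := by
    refine integral_congr_ae ?_
    filter_upwards [hAae] with x hx
    rw [hx]
    rw [Real.norm_eq_abs, smul_eq_mul, abs_mul, abs_inv, Nat.abs_cast]
  have hpos : (0 : ℝ) < n := by exact_mod_cast hn1
  have := hint
  rw [hcongr, integral_const_mul] at this
  calc ∫ x, |∑ k ∈ range n, g (F^[k] x)| ∂lam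
      = (n : ℝ) * ((n : ℝ)⁻¹ * ∫ x, |∑ k ∈ range n, g (F^[k] x)| ∂lam) := by
        field_simp
    _ ≤ (n : ℝ) * ε := by
        refine mul_le_mul_of_nonneg_left (le_trans this hAnorm) (le_of_lt hpos)
    _ = ε * n := mul_comm _ _

theorem integrable_comp_iterate (hF : MeasurePreserving F lam lam) (k : ℕ) {f : X → ℝ}
    (hf : Integrable f lam) : Integrable (fun x => f (F^[k] x)) lam := by
  have h : MemLp (f ∘ F^[k]) 1 lam :=
    (memLp_one_iff_integrable.mpr hf).comp_measurePreserving (hF.iterate k)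
  exact memLp_one_iff_integrable.mp h

theorem integral_comp_iterate (hF : MeasurePreserving F lam lam) (k : ℕ) {f : X → ℝ}
    (hf : AEStronglyMeasurable f lam) : ∫ x, f (F^[k] x) ∂lam = ∫ x, f x ∂lam := by
  have h : MeasurePreserving F^[k] lam lam := hF.iterate k
  rw [← integral_map h.measurable.aemeasurable (by rwa [h.map_eq]), h.map_eq]

/-- **L¹ mean ergodic theorem** for integrable mean-zero functions. -/
theorem l1_avg_small (hF : MeasurePreserving F lam lam) (herg : Ergodic F lam)
    {φ : X → ℝ} (hφm : Measurable φ) (hφ : Integrable φ lam) (hmean : ∫ x, φ x ∂lam = 0)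
    {ε : ℝ} (hε : 0 < ε) :
    ∃ N : ℕ, ∀ n ≥ N, ∫ x, |∑ k ∈ range n, φ (F^[k] x)| ∂lam ≤ ε * n := by
  have hKnn : ∀ K : ℕ, (0:ℝ) ≤ K := fun K => Nat.cast_nonneg K
  have hnegK : ∀ K : ℕ, -(K:ℝ) ≤ K := fun K => neg_le_self (hKnn K)
  -- truncation
  set gK : ℕ → X → ℝ := fun K x => max (min (φ x) K) (-(K : ℝ)) with hgK
  have hgKm : ∀ K, Measurable (gK K) := fun K => (hφm.min measurable_const).max measurable_const
  have hgKb : ∀ K x, |gK K x| ≤ K := by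
    intro K x
    rw [abs_le]
    exact ⟨le_max_right _ _, max_le (min_le_right _ _) (hnegK K)⟩
  have hgKle : ∀ K x, |φ x - gK K x| ≤ |φ x| := by
    intro K x
    rcases le_or_gt (φ x) (-(K:ℝ)) with h | h
    · have h1 : gK K x = -(K:ℝ) := by
        rw [hgK]; simp only
        rw [min_eq_left (le_trans h (hnegK K)), max_eq_right h]
      rw [h1, abs_of_nonpos (by linarith), abs_of_nonpos (le_trans h (neg_nonpos.mpr (hKnn K)))]
      linarith
    · rcases le_or_gt (K:ℝ) (φ x) with h2 | h2
      · have h1 : gK K x = (K:ℝ) := by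
          rw [hgK]; simp only
          rw [min_eq_right h2, max_eq_left (hnegK K)]
        rw [h1, abs_of_nonneg (by linarith [hKnn K]), abs_of_nonneg (le_trans (hKnn K) h2)]
        linarith
      · have h1 : gK K x = φ x := by
          rw [hgK]; simp only
          rw [min_eq_left (le_of_lt h2), max_eq_left (le_of_lt h)]
        simp [h1]
  have hgKint : ∀ K, Integrable (gK K) lam := by
    intro K
    refine Integrable.mono (hφ.abs.const_mul 2) ((hgKm K).aestronglyMeasurable) ?_
    filter_upwards with x
    simp only [Real.norm_eq_abs]
    have h1 := hgKle K x
    have h0 := abs_sub_abs_le_abs_sub (gK K x) (φ x)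
    rw [abs_sub_comm] at h0
    rw [abs_of_nonneg (show (0:ℝ) ≤ 2 * |φ x| by positivity)]
    linarith
  -- DCT
  have hdct : Tendsto (fun K => ∫ x, |φ x - gK K x| ∂lam) atTop (𝓝 0) := by
    have h0 : (0 : ℝ) = ∫ x, (0 : ℝ) ∂lam := by simp
    rw [h0]
    refine tendsto_integral_of_dominated_convergence (fun x => |φ x|)
      (fun K => ((hφm.sub (hgKm K)).abs).aestronglyMeasurable) hφ.abs ?_ ?_
    · intro K
      filter_upwards with x
      rw [Real.norm_eq_abs, abs_abs]
      exact hgKle K x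
    · filter_upwards with x
      have hev : ∀ᶠ K in atTop, |φ x - gK K x| = 0 := by
        filter_upwards [eventually_ge_atTop ⌈|φ x|⌉₊] with K hK
        have hb : |φ x| ≤ (K : ℝ) := le_trans (Nat.le_ceil _) (by exact_mod_cast hK)
        rw [abs_le] at hb
        have h1 : gK K x = φ x := by
          rw [hgK]; simp only
          rw [min_eq_left hb.2, max_eq_left hb.1]
        simp [h1]
      exact Tendsto.congr' (hev.mono fun K hK => hK.symm) tendsto_const_nhds
  -- pick K with small truncation error
  obtain ⟨K, hK⟩ : ∃ K, ∫ x, |φ x - gK K x| ∂lam ≤ ε / 4 :=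
    (hdct.eventually (eventually_le_nhds (show (0:ℝ) < ε / 4 by linarith))).exists
  set c : ℝ := ∫ x, gK K x ∂lam with hc
  have hcabs : |c| ≤ ε / 4 := by
    have h1 : c = ∫ x, (gK K x - φ x) ∂lam := by
      rw [integral_sub (hgKint K) hφ, hmean, sub_zero]
    rw [h1]
    calc |∫ x, (gK K x - φ x) ∂lam| ≤ ∫ x, ‖gK K x - φ x‖ ∂lam := by
          rw [← Real.norm_eq_abs]
          exact norm_integral_le_integral_norm _
      _ = ∫ x, |φ x - gK K x| ∂lam := by
          refine integral_congr_ae (Eventually.of_forall fun x => ?_)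
          simp only [Real.norm_eq_abs]
          rw [abs_sub_comm]
      _ ≤ ε / 4 := hK
  set g0 : X → ℝ := fun x => gK K x - c with hg0
  have hg0m : Measurable g0 := (hgKm K).sub measurable_const
  have hg0l2 : MemLp g0 2 lam := by
    refine MemLp.of_bound hg0m.aestronglyMeasurable ((K : ℝ) + |c|) ?_
    filter_upwards with x
    rw [Real.norm_eq_abs]
    calc |gK K x - c| ≤ |gK K x| + |c| := abs_sub _ _
      _ ≤ (K : ℝ) + |c| := by linarith [hgKb K x]
  have hg0mean : ∫ x, g0 x ∂lam = 0 := by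
    rw [hg0]
    simp only
    rw [integral_sub (hgKint K) (integrable_const c), integral_const]
    simp [hc]
  obtain ⟨N, hN⟩ := l1_avg_small_of_l2 hF herg hg0l2 hg0mean (show (0:ℝ) < ε/4 by linarith)
  refine ⟨N, fun n hn => ?_⟩
  -- decompose φ = g0 + c + (φ - gK K)
  have hdecomp : ∀ x, ∑ k ∈ range n, φ (F^[k] x)
      = (∑ k ∈ range n, g0 (F^[k] x)) + n * c
        + ∑ k ∈ range n, (φ (F^[k] x) - gK K (F^[k] x)) := by
    intro x
    have h1 : ∀ y, φ y = (g0 y + c) + (φ y - gK K y) := by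
      intro y; rw [hg0]; ring
    calc ∑ k ∈ range n, φ (F^[k] x)
        = ∑ k ∈ range n, ((g0 (F^[k] x) + c) + (φ (F^[k] x) - gK K (F^[k] x))) := by
          exact Finset.sum_congr rfl fun k _ => h1 _
      _ = (∑ k ∈ range n, (g0 (F^[k] x) + c))
          + ∑ k ∈ range n, (φ (F^[k] x) - gK K (F^[k] x)) := Finset.sum_add_distrib
      _ = (∑ k ∈ range n, g0 (F^[k] x)) + n * c
          + ∑ k ∈ range n, (φ (F^[k] x) - gK K (F^[k] x)) := by
          rw [Finset.sum_add_distrib, Finset.sum_const, Finset.card_range, nsmul_eq_mul]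
  -- integrability facts
  have hdiffint : Integrable (fun x => φ x - gK K x) lam := hφ.sub (hgKint K)
  have hSg0int : Integrable (fun x => ∑ k ∈ range n, g0 (F^[k] x)) lam :=
    integrable_finset_sum _ fun k _ => integrable_comp_iterate hF k (hg0l2.integrable one_le_two)
  have hSφint : Integrable (fun x => ∑ k ∈ range n, φ (F^[k] x)) lam :=
    integrable_finset_sum _ fun k _ => integrable_comp_iterate hF k hφ
  have hSdint : Integrable
      (fun x => ∑ k ∈ range n, |φ (F^[k] x) - gK K (F^[k] x)|) lam :=
    integrable_finset_sum _ fun k _ => (integrable_comp_iterate hF k hdiffint).abs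
  -- pointwise bound and integrate
  have hmono : ∫ x, |∑ k ∈ range n, φ (F^[k] x)| ∂lam
      ≤ ∫ x, (|∑ k ∈ range n, g0 (F^[k] x)| + n * |c|
          + ∑ k ∈ range n, |φ (F^[k] x) - gK K (F^[k] x)|) ∂lam := by
    have hab : Integrable (fun x => |∑ k ∈ range n, g0 (F^[k] x)| + (n:ℝ) * |c|) lam :=
      hSg0int.abs.add (integrable_const _)
    refine integral_mono hSφint.abs (hab.add hSdint) ?_
    intro x
    dsimp only
    rw [hdecomp x]
    calc |(∑ k ∈ range n, g0 (F^[k] x)) + n * c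
          + ∑ k ∈ range n, (φ (F^[k] x) - gK K (F^[k] x))|
        ≤ |(∑ k ∈ range n, g0 (F^[k] x)) + n * c|
          + |∑ k ∈ range n, (φ (F^[k] x) - gK K (F^[k] x))| := abs_add_le _ _
      _ ≤ |∑ k ∈ range n, g0 (F^[k] x)| + |(n : ℝ) * c|
          + ∑ k ∈ range n, |φ (F^[k] x) - gK K (F^[k] x)| := by
          gcongr
          · exact abs_add_le _ _
          · exact Finset.abs_sum_le_sum_abs _ _
      _ = |∑ k ∈ range n, g0 (F^[k] x)| + n * |c|
          + ∑ k ∈ range n, |φ (F^[k] x) - gK K (F^[k] x)| := by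
          rw [abs_mul, Nat.abs_cast]
  have hsplit : ∫ x, (|∑ k ∈ range n, g0 (F^[k] x)| + n * |c|
        + ∑ k ∈ range n, |φ (F^[k] x) - gK K (F^[k] x)|) ∂lam
      = (∫ x, |∑ k ∈ range n, g0 (F^[k] x)| ∂lam) + n * |c|
        + ∑ k ∈ range n, ∫ x, |φ (F^[k] x) - gK K (F^[k] x)| ∂lam := by
    have hab : Integrable (fun x => |∑ k ∈ range n, g0 (F^[k] x)| + (n:ℝ) * |c|) lam :=
      hSg0int.abs.add (integrable_const _)
    rw [integral_add hab hSdint, integral_add hSg0int.abs (integrable_const _), integral_const,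
      integral_finset_sum _ (fun k _ => (integrable_comp_iterate hF k hdiffint).abs)]
    simp
  have hdiffsum : ∑ k ∈ range n, ∫ x, |φ (F^[k] x) - gK K (F^[k] x)| ∂lam ≤ (ε/4) * n := by
    have h1 : ∀ k, ∫ x, |φ (F^[k] x) - gK K (F^[k] x)| ∂lam
        = ∫ x, |φ x - gK K x| ∂lam :=
      fun k => integral_comp_iterate hF k (hφm.sub (hgKm K)).abs.aestronglyMeasurable
    calc ∑ k ∈ range n, ∫ x, |φ (F^[k] x) - gK K (F^[k] x)| ∂lam
        = ∑ k ∈ range n, ∫ x, |φ x - gK K x| ∂lam := Finset.sum_congr rfl fun k _ => h1 k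
      _ = n * ∫ x, |φ x - gK K x| ∂lam := by
          rw [Finset.sum_const, Finset.card_range, nsmul_eq_mul]
      _ ≤ n * (ε/4) := by
          refine mul_le_mul_of_nonneg_left hK (Nat.cast_nonneg n)
      _ = (ε/4) * n := mul_comm _ _
  have hg0bound := hN n hn
  calc ∫ x, |∑ k ∈ range n, φ (F^[k] x)| ∂lam
      ≤ (∫ x, |∑ k ∈ range n, g0 (F^[k] x)| ∂lam) + n * |c|
        + ∑ k ∈ range n, ∫ x, |φ (F^[k] x) - gK K (F^[k] x)| ∂lam := by
        rw [← hsplit]; exact hmono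
    _ ≤ (ε/4) * n + n * (ε/4) + (ε/4) * n := by
        have h2 : (n:ℝ) * |c| ≤ (n:ℝ) * (ε/4) := mul_le_mul_of_nonneg_left hcabs (Nat.cast_nonneg n)
        exact add_le_add (add_le_add hg0bound h2) hdiffsum
    _ ≤ ε * n := by
        have : (0:ℝ) ≤ n := Nat.cast_nonneg n
        nlinarith

/-- Cocycle identity. -/
theorem Sz_add (e : X → ℤ) (F : X → X) (j m : ℕ) (x : X) :
    ∑ k ∈ range (j + m), e (F^[k] x)
      = (∑ k ∈ range j, e (F^[k] x)) + ∑ k ∈ range m, e (F^[k] (F^[j] x)) := by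
  rw [Finset.sum_range_add]
  congr 1
  refine Finset.sum_congr rfl fun i _ => ?_
  rw [add_comm j i, Function.iterate_add_apply]

open scoped Classical in
/-- The counting lemma: visits to the non-recurrent set `B` before time `n` give distinct
integer values of the cocycle, so their number is controlled. -/
theorem visits_card_le (e : X → ℤ) (F : X → X) {B : Set X}
    (hB : ∀ y, y ∈ B ↔ ∀ m, 1 ≤ m → (∑ k ∈ range m, e (F^[k] y)) ≠ 0)
    (x : X) (n T : ℕ) :
    (((range n).filter (fun j => F^[j] x ∈ B)).card : ℕ)
      ≤ (2 * T + 1) + ((range n).filter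
          (fun j => (T : ℤ) < |∑ k ∈ range j, e (F^[k] x)|)).card := by
  classical
  set Sz : ℕ → ℤ := fun j => ∑ k ∈ range j, e (F^[k] x) with hSz
  set s := (range n).filter (fun j => F^[j] x ∈ B) with hs
  have key : ∀ j k, j ∈ s → j < k → Sz j ≠ Sz k := by
    intro j k hj hjk heq
    have hjB : F^[j] x ∈ B := (Finset.mem_filter.mp hj).2
    have hco : Sz (j + (k - j)) = Sz j + ∑ i ∈ range (k - j), e (F^[i] (F^[j] x)) := by
      simp only [hSz]
      rw [Sz_add]
    rw [show j + (k - j) = k by omega] at hco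
    have hne : (∑ i ∈ range (k - j), e (F^[i] (F^[j] x))) ≠ 0 :=
      (hB (F^[j] x)).mp hjB (k - j) (by omega)
    omega
  have hsplit : s.card ≤ (s.filter (fun j => |Sz j| ≤ (T:ℤ))).card
      + (s.filter (fun j => ¬ |Sz j| ≤ (T:ℤ))).card := by
    calc s.card = ((s.filter (fun j => |Sz j| ≤ (T:ℤ)))
          ∪ (s.filter (fun j => ¬ |Sz j| ≤ (T:ℤ)))).card := by
          rw [Finset.filter_union_filter_not_eq]
      _ ≤ _ := Finset.card_union_le _ _
  have h1 : (s.filter (fun j => |Sz j| ≤ (T:ℤ))).card ≤ 2 * T + 1 := by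
    have hmaps : ∀ j ∈ s.filter (fun j => |Sz j| ≤ (T:ℤ)), Sz j ∈ Finset.Icc (-(T:ℤ)) T := by
      intro j hj
      have := (Finset.mem_filter.mp hj).2
      rw [Finset.mem_Icc]
      exact abs_le.mp this
    have hinj : Set.InjOn Sz ↑(s.filter (fun j => |Sz j| ≤ (T:ℤ))) := by
      intro j hj k hk heq
      by_contra hne
      rcases lt_or_gt_of_ne hne with h | h
      · exact key j k (Finset.mem_of_mem_filter j hj) h heq
      · exact key k j (Finset.mem_of_mem_filter k hk) h heq.symm
    have := Finset.card_le_card_of_injOn Sz hmaps hinj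
    rwa [Int.card_Icc, show ((T:ℤ) + 1 - -(T:ℤ)).toNat = 2 * T + 1 by omega] at this
  have h2 : (s.filter (fun j => ¬ |Sz j| ≤ (T:ℤ))).card
      ≤ ((range n).filter (fun j => (T : ℤ) < |Sz j|)).card := by
    refine Finset.card_le_card ?_
    intro j hj
    rw [Finset.mem_filter] at hj ⊢
    exact ⟨(Finset.mem_filter.mp hj.1).1, not_le.mp hj.2⟩
  have hgf : ((range n).filter (fun j => (T : ℤ) < |∑ k ∈ range j, e (F^[k] x)|))
      = ((range n).filter (fun j => (T:ℤ) < |Sz j|)) := rfl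
  rw [hgf]
  omega

open scoped Classical in
/-- The non-recurrent set has measure zero. -/
theorem meas_nonrecurrent_zero (hF : MeasurePreserving F lam lam) (herg : Ergodic F lam)
    {e : X → ℤ} (hem : Measurable e) (he : Integrable (fun x => (e x : ℝ)) lam)
    (hmean : ∫ x, (e x : ℝ) ∂lam = 0) :
    lam {x | ∀ m, 1 ≤ m → (∑ k ∈ range m, e (F^[k] x)) ≠ 0} = 0 := by
  set Sz : ℕ → X → ℤ := fun m y => ∑ k ∈ range m, e (F^[k] y) with hSzdef
  have hSzm : ∀ m, Measurable (Sz m) :=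
    fun m => Finset.measurable_sum _ (fun k _ => hem.comp (hF.iterate k).measurable)
  set B := {x | ∀ m, 1 ≤ m → Sz m x ≠ 0} with hBdef
  have hBmeas : MeasurableSet B := by
    have hB : B = ⋂ (m : ℕ), ⋂ (_ : 1 ≤ m), {x | Sz m x ≠ 0} := by
      ext y; simp [hBdef, Set.mem_iInter]
    rw [hB]
    exact MeasurableSet.iInter fun m => MeasurableSet.iInter fun _ =>
      ((hSzm m) (measurableSet_singleton 0)).compl
  by_contra hB0
  have hbpos : 0 < (lam B).toReal :=
    ENNReal.toReal_pos hB0 (measure_ne_top lam B)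
  set b := (lam B).toReal with hb
  have hε : (0:ℝ) < b / 6 := by linarith
  set ε := b / 6 with hεdef
  -- real-valued Birkhoff sums
  have hSzr : ∀ m x, ((Sz m x : ℤ) : ℝ) = ∑ k ∈ range m, ((e (F^[k] x) : ℤ) : ℝ) := by
    intro m x; push_cast [hSzdef]; rfl
  have hφm : Measurable (fun x => (e x : ℝ)) := measurable_from_top.comp hem
  obtain ⟨N, hN⟩ := l1_avg_small hF herg hφm he hmean (mul_pos hε hε)
  -- choose a large time n
  obtain ⟨n0, hn0⟩ := exists_nat_gt ((N + 3 : ℝ) / (b / 2))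
  set n := max (max N 1) n0 with hn
  have hnN : N ≤ n := le_trans (le_max_left _ _) (le_max_left _ _)
  have hn1 : 1 ≤ n := le_trans (le_max_right _ _) (le_max_left _ _)
  have hnpos : (0:ℝ) < n := by exact_mod_cast hn1
  have hngt : (N + 3 : ℝ) / (b / 2) < n :=
    lt_of_lt_of_le hn0 (by exact_mod_cast le_max_right (max N 1) n0)
  set T := ⌈ε * n⌉₊ with hT
  have hεn : (0:ℝ) < ε * n := mul_pos hε hnpos
  have hTn : ε * n ≤ (T:ℝ) := Nat.le_ceil _
  have hTub : (T:ℝ) ≤ ε * n + 1 := le_of_lt (Nat.ceil_lt_add_one (le_of_lt hεn))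
  -- the visit sets and the large-value sets
  set A : ℕ → Set X := fun j => {x | (T:ℤ) < |Sz j x|} with hA
  have hAmeas : ∀ j, MeasurableSet (A j) := by
    intro j
    have : A j = (fun x => |Sz j x|) ⁻¹' (Set.Ioi (T:ℤ)) := rfl
    rw [this]
    have habs : Measurable (fun x => |Sz j x|) :=
      (measurable_from_top (f := (|·| : ℤ → ℤ))).comp (hSzm j)
    exact habs measurableSet_Ioi
  -- indicator sum functions
  set Vf : X → ℝ := fun x => ∑ j ∈ range n, (F^[j] ⁻¹' B).indicator (fun _ => (1:ℝ)) x with hVf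
  set Wf : X → ℝ := fun x => ∑ j ∈ range n, (A j).indicator (fun _ => (1:ℝ)) x with hWf
  have hpreim : ∀ j : ℕ, MeasurableSet (F^[j] ⁻¹' B) := fun j => (hF.iterate j).measurable hBmeas
  have hVint : Integrable Vf lam :=
    integrable_finset_sum _ fun j _ => (integrable_const (1:ℝ)).indicator (hpreim j)
  have hWint : Integrable Wf lam :=
    integrable_finset_sum _ fun j _ => (integrable_const (1:ℝ)).indicator (hAmeas j)
  have hVval : ∫ x, Vf x ∂lam = n * b := by
    rw [hVf, integral_finset_sum _
      (fun j _ => (integrable_const (1:ℝ)).indicator (hpreim j))]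
    have : ∀ j ∈ range n, ∫ x, (F^[j] ⁻¹' B).indicator (fun _ => (1:ℝ)) x ∂lam = b := by
      intro j _
      rw [integral_indicator_const (1:ℝ) (hpreim j), measureReal_def, (hF.iterate j).measure_preimage
        hBmeas.nullMeasurableSet]
      simp [hb]
    rw [Finset.sum_congr rfl this, Finset.sum_const, Finset.card_range, nsmul_eq_mul]
  have hWval : ∫ x, Wf x ∂lam = ∑ j ∈ range n, (lam (A j)).toReal := by
    rw [hWf, integral_finset_sum _
      (fun j _ => (integrable_const (1:ℝ)).indicator (hAmeas j))]
    refine Finset.sum_congr rfl fun j _ => ?_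
    rw [integral_indicator_const (1:ℝ) (hAmeas j)]
    simp [measureReal_def]
  -- pointwise counting bound
  have hcount : ∀ x, Vf x ≤ (2 * T + 1 : ℝ) + Wf x := by
    intro x
    have hVcard : Vf x = (((range n).filter (fun j => F^[j] x ∈ B)).card : ℝ) := by
      rw [hVf, Finset.card_filter]
      push_cast
      refine Finset.sum_congr rfl fun j _ => ?_
      by_cases h : F^[j] x ∈ B <;> simp [Set.indicator_apply, Set.mem_preimage, h]
    have hWcard : Wf x = (((range n).filter (fun j => (T:ℤ) < |Sz j x|)).card : ℝ) := by
      rw [hWf, Finset.card_filter]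
      push_cast
      refine Finset.sum_congr rfl fun j _ => ?_
      by_cases h : (T:ℤ) < |Sz j x| <;> simp [Set.indicator_apply, hA, Set.mem_setOf_eq, h]
    rw [hVcard, hWcard]
    have hkey := visits_card_le e F (B := B) (fun y => Iff.rfl) x n T
    exact_mod_cast hkey
  have hineq : (n:ℝ) * b ≤ (2*T+1 : ℝ) + ∑ j ∈ range n, (lam (A j)).toReal := by
    calc (n:ℝ)*b = ∫ x, Vf x ∂lam := hVval.symm
      _ ≤ ∫ x, ((2*T+1:ℝ) + Wf x) ∂lam :=
          integral_mono hVint ((integrable_const _).add hWint) hcount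
      _ = (2*T+1 : ℝ) + ∫ x, Wf x ∂lam := by
          rw [integral_add (integrable_const _) hWint, integral_const]
          simp
      _ = (2*T+1 : ℝ) + ∑ j ∈ range n, (lam (A j)).toReal := by rw [hWval]
  -- Markov bound
  have hSzrint : ∀ j : ℕ, Integrable (fun x => ∑ k ∈ range j, ((e (F^[k] x) : ℤ) : ℝ)) lam :=
    fun j => integrable_finset_sum _ fun k _ => integrable_comp_iterate hF k he
  have hMar : ∀ j, N ≤ j → j < n → (lam (A j)).toReal ≤ ε := by
    intro j hjN hjn
    have hintj : ∫ x, |∑ k ∈ range j, ((e (F^[k] x) : ℤ) : ℝ)| ∂lam ≤ ε * ε * j := hN j hjN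
    have hm := mul_meas_ge_le_integral_of_nonneg
      (f := fun x => |∑ k ∈ range j, ((e (F^[k] x) : ℤ) : ℝ)|)
      (Filter.Eventually.of_forall fun x => abs_nonneg _) (hSzrint j).abs ((T:ℝ)+1)
    have hsub : A j ⊆ {x | (T:ℝ)+1 ≤ |∑ k ∈ range j, ((e (F^[k] x) : ℤ) : ℝ)|} := by
      intro x hx
      have h1 : (T:ℤ) + 1 ≤ |Sz j x| := Int.lt_iff_add_one_le.mp hx
      have h2 : ((T:ℝ)+1 : ℝ) ≤ ((|Sz j x| : ℤ) : ℝ) := by exact_mod_cast h1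
      have h3 : ((|Sz j x| : ℤ) : ℝ) = |∑ k ∈ range j, ((e (F^[k] x) : ℤ) : ℝ)| := by
        rw [← hSzr j x]
        push_cast
        rfl
      rw [h3] at h2
      exact h2
    have hmono' : (lam (A j)).toReal
        ≤ (lam {x | (T:ℝ)+1 ≤ |∑ k ∈ range j, ((e (F^[k] x) : ℤ) : ℝ)|}).toReal :=
      ENNReal.toReal_mono (measure_ne_top _ _) (measure_mono hsub)
    have hchain : (ε * n) * (lam (A j)).toReal ≤ ε * ε * n := by
      have h4 : (ε * n) * (lam (A j)).toReal ≤ ((T:ℝ)+1)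
          * (lam {x | (T:ℝ)+1 ≤ |∑ k ∈ range j, ((e (F^[k] x) : ℤ) : ℝ)|}).toReal := by
        refine mul_le_mul (by linarith) hmono' ENNReal.toReal_nonneg (by linarith)
      have h5 : ε * ε * (j:ℝ) ≤ ε * ε * n := by
        refine mul_le_mul_of_nonneg_left ?_ (by positivity)
        exact_mod_cast le_of_lt hjn
      rw [measureReal_def] at hm
      linarith
    have := le_of_mul_le_mul_left (by linarith [hchain] :
      (ε * n) * (lam (A j)).toReal ≤ (ε * n) * ε) hεn
    exact this
  have hle1 : ∀ j : ℕ, (lam (A j)).toReal ≤ 1 := by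
    intro j
    calc (lam (A j)).toReal ≤ (lam Set.univ).toReal :=
        ENNReal.toReal_mono (measure_ne_top _ _) (measure_mono (Set.subset_univ _))
      _ = 1 := by simp
  have hsum : ∑ j ∈ range n, (lam (A j)).toReal ≤ N + ε * n := by
    rw [← Finset.sum_filter_add_sum_filter_not (range n) (fun j => j < N)]
    have hpart1 : ∑ j ∈ (range n).filter (fun j => j < N), (lam (A j)).toReal ≤ N := by
      calc ∑ j ∈ (range n).filter (fun j => j < N), (lam (A j)).toReal
          ≤ ∑ _j ∈ (range n).filter (fun j => j < N), (1:ℝ) :=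
            Finset.sum_le_sum fun j _ => hle1 j
        _ = ((range n).filter (fun j => j < N)).card := by rw [Finset.sum_const]; simp
        _ ≤ N := by
            have : ((range n).filter (fun j => j < N)).card ≤ (range N).card := by
              refine Finset.card_le_card ?_
              intro j hj
              rw [Finset.mem_filter] at hj
              exact Finset.mem_range.mpr hj.2
            simpa using (by exact_mod_cast this : (((range n).filter (fun j => j < N)).card : ℝ) ≤ (range N).card)
    have hpart2 : ∑ j ∈ (range n).filter (fun j => ¬ j < N), (lam (A j)).toReal ≤ ε * n := by
      calc ∑ j ∈ (range n).filter (fun j => ¬ j < N), (lam (A j)).toReal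
          ≤ ∑ _j ∈ (range n).filter (fun j => ¬ j < N), ε := by
            refine Finset.sum_le_sum fun j hj => ?_
            rw [Finset.mem_filter] at hj
            exact hMar j (not_lt.mp hj.2) (Finset.mem_range.mp hj.1)
        _ = ((range n).filter (fun j => ¬ j < N)).card * ε := by
            rw [Finset.sum_const, nsmul_eq_mul]
        _ ≤ n * ε := by
            refine mul_le_mul_of_nonneg_right ?_ (le_of_lt hε)
            have := Finset.card_filter_le (range n) (fun j => ¬ j < N)
            rw [Finset.card_range] at this
            exact_mod_cast this
        _ = ε * n := mul_comm _ _
    linarith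
  -- contradiction
  have hfinal : (n:ℝ) * b ≤ 3 * ε * n + (N + 3) := by
    have hT3 : (2*T+1 : ℝ) ≤ 2*ε*n + 3 := by
      have : (T:ℝ) ≤ ε * n + 1 := hTub
      linarith
    calc (n:ℝ) * b ≤ (2*T+1 : ℝ) + ∑ j ∈ range n, (lam (A j)).toReal := hineq
      _ ≤ (2*ε*n + 3) + (N + ε * n) := by linarith [hsum]
      _ = 3 * ε * n + (N + 3) := by ring
  have h3ε : 3 * ε = b / 2 := by rw [hεdef]; ring
  have hlast : (N + 3 : ℝ) < (b/2) * n := by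
    rw [div_lt_iff₀ (by linarith : (0:ℝ) < b/2)] at hngt
    linarith
  rw [h3ε] at hfinal
  nlinarith

end AtkinsonAux

open Finset in
set_option maxHeartbeats 1000000 in
set_option synthInstance.maxHeartbeats 1000000 in
/-- **Atkinson's recurrence theorem.** If `F` is an ergodic invertible
measure-preserving transformation of a probability space and `e : X → ℤ` is
integrable with zero mean, then the cocycle `S n x = ∑_{k<n} e (F^k x)` is
recurrent: for a.e. `x` there are infinitely many `n` with `S n x = 0`. -/
theorem atkinson_recurrence
    {X : Type*} [MeasurableSpace X] (lam : Measure X) [IsProbabilityMeasure lam]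
    (F : X → X) (Finv : X → X)
    (hF : MeasurePreserving F lam lam) (hFinv : MeasurePreserving Finv lam lam)
    (hinv : Function.LeftInverse Finv F ∧ Function.RightInverse Finv F)
    (herg : Ergodic F lam)
    (e : X → ℤ) (he : Integrable (fun x => (e x : ℝ)) lam)
    (hmean : ∫ x, (e x : ℝ) ∂lam = 0) :
    ∀ᵐ x ∂lam, ∀ N : ℕ, ∃ n ≥ N, 1 ≤ n ∧
      (∑ k ∈ Finset.range n, e (F^[k] x)) = 0 := by
  -- replace `e` by a measurable representative
  obtain ⟨g, hgsm, hgae⟩ := he.aestronglyMeasurable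
  set e' : X → ℤ := fun x => ⌊g x⌋ with he'def
  have he'm : Measurable e' := hgsm.measurable.floor
  have he'e : ∀ᵐ x ∂lam, e' x = e x := by
    filter_upwards [hgae] with x hx
    rw [he'def]
    simp only
    rw [← hx, Int.floor_intCast]
  have he'cast : (fun x => (e' x : ℝ)) =ᵐ[lam] (fun x => (e x : ℝ)) := by
    filter_upwards [he'e] with x hx; rw [hx]
  have he'int : Integrable (fun x => (e' x : ℝ)) lam := he.congr he'cast.symm
  have he'mean : ∫ x, (e' x : ℝ) ∂lam = 0 := by
    rw [integral_congr_ae he'cast, hmean]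
  -- the measure-zero lemma
  have hB0 := meas_nonrecurrent_zero hF herg he'm he'int he'mean
  -- a.e. x, all iterates land in the recurrent set, and e' agrees with e along the orbit
  have hrec : ∀ᵐ x ∂lam, ∀ j : ℕ, ∃ m, 1 ≤ m ∧ (∑ k ∈ range m, e' (F^[k] (F^[j] x))) = 0 := by
    rw [ae_all_iff]
    intro j
    have h0 : lam (F^[j] ⁻¹' {x | ∀ m, 1 ≤ m → (∑ k ∈ range m, e' (F^[k] x)) ≠ 0}) = 0 :=
      (hF.iterate j).quasiMeasurePreserving.preimage_null hB0
    have hset : {x | ¬ ∃ m, 1 ≤ m ∧ (∑ k ∈ range m, e' (F^[k] (F^[j] x))) = 0}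
        = F^[j] ⁻¹' {y | ∀ m, 1 ≤ m → (∑ k ∈ range m, e' (F^[k] y)) ≠ 0} := by
      ext x
      simp only [Set.mem_setOf_eq, Set.mem_preimage, not_exists, not_and]
    rw [ae_iff, hset]
    exact h0
  have hagree : ∀ᵐ x ∂lam, ∀ k : ℕ, e' (F^[k] x) = e (F^[k] x) := by
    rw [ae_all_iff]
    intro k
    exact (hF.iterate k).quasiMeasurePreserving.ae_eq_comp he'e
  filter_upwards [hrec, hagree] with x hx hcast
  -- all partial sums based at any iterate agree between e' and e
  have hSeq : ∀ j m : ℕ, (∑ k ∈ range m, e' (F^[k] (F^[j] x)))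
      = ∑ k ∈ range m, e (F^[k] (F^[j] x)) := by
    intro j m
    refine Finset.sum_congr rfl fun k _ => ?_
    have h1 : F^[k] (F^[j] x) = F^[k + j] x := (Function.iterate_add_apply F k j x).symm
    rw [h1]
    exact hcast (k + j)
  have hx' : ∀ j : ℕ, ∃ m, 1 ≤ m ∧ (∑ k ∈ range m, e (F^[k] (F^[j] x))) = 0 := by
    intro j
    obtain ⟨m, hm1, hm0⟩ := hx j
    exact ⟨m, hm1, by rw [← hSeq j m]; exact hm0⟩
  -- build infinitely many zeros by induction
  intro N
  induction N with
  | zero =>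
    obtain ⟨m, hm1, hm0⟩ := hx' 0
    exact ⟨m, Nat.zero_le m, hm1, by simpa using hm0⟩
  | succ N ih =>
    obtain ⟨n, hnN, hn1, hn0⟩ := ih
    obtain ⟨m, hm1, hm0⟩ := hx' n
    refine ⟨n + m, by omega, by omega, ?_⟩
    rw [Sz_add e F n m x, hn0, hm0, add_zero]
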